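/- Under the admissibility conditions Var < 1 and Var·‖Ã‖ < d(1−Var)²/4, let X_▷ solve X = ∫_Γ K'(μ)(Ã+X)(Ã+X−μ)^{-1} dμ with ‖X_▷‖ ≤ r_min, and set Z_▷ = Ã + X_▷. Then for every z ∉ Γ the continued transfer function factorizes as M_Γ(z) = W^▷_Γ(z)(Z_▷ − z), where W^▷_Γ(z) = I − ∫_Γ K'(μ)(Z_▷−μ)^{-1} dμ + z ∫_Γ K'(μ)(z−μ)^{-1}(Z_▷−μ)^{-1} dμ. -/
import Mathlib


open MeasureTheory

/- STATEMENT 12: Factorization M_Γ(z) = W^▷_Γ(z)(Z_▷ - z).  The contour Γ is parametrized by γ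
with derivative γ'; X_▷ solves the right transformation equation, Z_▷ = Ã + X_▷ with resolvents
Rres t = (Z_▷ - γ(t))^{-1}; and for z off Γ,
M_Γ(z) = Ã - z + ∫_Γ K'(μ) z/(z-μ) dμ,
W^▷_Γ(z) = I - ∫_Γ K'(μ)(Z_▷-μ)^{-1} dμ + z ∫_Γ K'(μ)(z-μ)^{-1}(Z_▷-μ)^{-1} dμ. -/
theorem transfer_function_factorization
    {H : Type*} [NormedAddCommGroup H] [InnerProductSpace ℂ H] [CompleteSpace H]
    (At X Z : H →L[ℂ] H) (hZ : Z = At + X)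
    (γ γ' : ℝ → ℂ) (K' : ℂ → (H →L[ℂ] H))
    (Rres : ℝ → (H →L[ℂ] H))
    (hres : ∀ t, (Z - γ t • (1 : H →L[ℂ] H)) * Rres t = 1 ∧
      Rres t * (Z - γ t • (1 : H →L[ℂ] H)) = 1)
    (hint0 : Integrable (fun t => γ' t • (K' (γ t) * (Z * Rres t))) volume)
    (hfix : X = ∫ t : ℝ, γ' t • (K' (γ t) * (Z * Rres t)))
    (z : ℂ) (hz : ∀ t, z ≠ γ t)
    (hint1 : Integrable (fun t => γ' t • (K' (γ t) * Rres t)) volume)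
    (hint2 : Integrable (fun t => (γ' t / (z - γ t)) • (K' (γ t) * Rres t)) volume)
    (hint3 : Integrable (fun t => (γ' t * (z / (z - γ t))) • K' (γ t)) volume)
    (M W : H →L[ℂ] H)
    (hM : M = At - z • (1 : H →L[ℂ] H)
      + ∫ t : ℝ, (γ' t * (z / (z - γ t))) • K' (γ t))
    (hW : W = 1 - (∫ t : ℝ, γ' t • (K' (γ t) * Rres t))
      + z • ∫ t : ℝ, (γ' t / (z - γ t)) • (K' (γ t) * Rres t)) :
    M = W * (Z - z • (1 : H →L[ℂ] H)) := by
  set C : H →L[ℂ] H := Z - z • (1 : H →L[ℂ] H) with hC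
  -- right multiplication by C as a continuous linear map
  set L : (H →L[ℂ] H) →L[ℂ] (H →L[ℂ] H) :=
    (ContinuousLinearMap.mul ℂ (H →L[ℂ] H)).flip C with hL
  have hLapp : ∀ A : H →L[ℂ] H, L A = A * C := fun A => rfl
  -- pointwise key identity
  have key : ∀ t,
      (γ' t * (z / (z - γ t))) • K' (γ t) - γ' t • (K' (γ t) * (Z * Rres t))
        = z • ((γ' t / (z - γ t)) • (K' (γ t) * Rres t) * C)
          - (γ' t • (K' (γ t) * Rres t)) * C := by
    intro t
    have hne : z - γ t ≠ 0 := sub_ne_zero.mpr (hz t)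
    obtain ⟨h1, h2⟩ := hres t
    -- Z * Rres t = 1 + γ t • Rres t
    have hZR : Z * Rres t = 1 + γ t • Rres t := by
      have := h1
      rw [sub_mul, smul_mul_assoc, one_mul] at this
      linear_combination (norm := abel) this
    -- K' R * C = γ t • (K' R) - z • (K' R) + ... compute directly
    have hRC : Rres t * C = 1 + (γ t - z) • Rres t := by
      have : Rres t * (Z - γ t • (1 : H →L[ℂ] H)) = 1 := h2
      rw [mul_sub, mul_smul_comm, mul_one] at this
      rw [hC, mul_sub, mul_smul_comm, mul_one, sub_smul]
      linear_combination (norm := abel) this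
    rw [hZR]
    simp only [smul_mul_assoc, mul_assoc, hRC, mul_add, mul_one, mul_smul_comm]
    match_scalars <;> field_simp <;> ring
  -- integrate both sides
  have hI : (∫ t : ℝ, (γ' t * (z / (z - γ t))) • K' (γ t))
        - (∫ t : ℝ, γ' t • (K' (γ t) * (Z * Rres t)))
      = z • ((∫ t : ℝ, (γ' t / (z - γ t)) • (K' (γ t) * Rres t)) * C)
        - (∫ t : ℝ, γ' t • (K' (γ t) * Rres t)) * C := by
    rw [← integral_sub hint3 hint0]
    have h2' : (∫ t : ℝ, (γ' t / (z - γ t)) • (K' (γ t) * Rres t)) * C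
        = ∫ t : ℝ, ((γ' t / (z - γ t)) • (K' (γ t) * Rres t)) * C := by
      rw [← hLapp]
      rw [← L.integral_comp_comm hint2]
      simp [hLapp]
    have h1' : (∫ t : ℝ, γ' t • (K' (γ t) * Rres t)) * C
        = ∫ t : ℝ, (γ' t • (K' (γ t) * Rres t)) * C := by
      rw [← hLapp, ← L.integral_comp_comm hint1]
      simp [hLapp]
    rw [h2', h1', ← integral_smul, ← integral_sub]
    · exact integral_congr_ae (Filter.Eventually.of_forall key)
    · exact (L.integrable_comp hint2).smul z
    · exact L.integrable_comp hint1
  have hAt : At = Z - X := by rw [hZ]; abel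
  rw [hM, hW, hAt, hfix]
  rw [add_mul, sub_mul, one_mul, smul_mul_assoc]
  linear_combination (norm := abel) hI - hC
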